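/- arXiv:2511.09538 — 2 statements merged into one kernel-verified Lean document; each statement's English description precedes it below -/
import Mathlib

section
/- Let G = ⋃_n G_n be an increasing union of finite subgroups with |G_n| = (d-1)^n for d > 2, and set V_n := G_n \ G_{n-1}. Then (V_n)_{n≥1} is a tempered Følner sequence in G: |V_n| = (d-2)(d-1)^{n-1}, gV_n = V_n for all g ∈ G and all sufficiently large n, and |⋃_{i=1}^{n-1} V_i^{-1}V_n| ≤ ((d-1)/(d-2))·|V_n| for all n. -/
open scoped Pointwise

/-- Let `G = ⋃ n, G n` be an increasing union of finite subgroups with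
`|G n| = (d-1)^n` for `d > 2`, and `V n := G n \ G (n-1)` for `n ≥ 1`.  Then
`(V n)` is a tempered Følner sequence:
`|V n| = (d-2)(d-1)^(n-1)`, for every `g` one has `g • V n = V n` for all
sufficiently large `n`, and `|⋃_{i=1}^{n-1} (V i)⁻¹ (V n)| ≤ ((d-1)/(d-2)) |V n|`. -/
theorem stmt_5 {Γ : Type*} [Group Γ] [Countable Γ] (d : ℕ) (hd : 2 < d)
    (G : ℕ → Subgroup Γ) (hfin : ∀ n, Finite (G n))
    (hmono : ∀ n, G n ≤ G (n + 1))
    (hunion : ∀ x : Γ, ∃ n, x ∈ G n)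
    (hcard : ∀ n, Nat.card (G n) = (d - 1) ^ n)
    (V : ℕ → Set Γ) (hV : ∀ n, 1 ≤ n → V n = (G n : Set Γ) \ (G (n - 1) : Set Γ)) :
    (∀ n, 1 ≤ n → Nat.card ↥(V n) = (d - 2) * (d - 1) ^ (n - 1)) ∧
    (∀ g : Γ, ∃ N : ℕ, ∀ n, N ≤ n → (g * ·) '' V n = V n) ∧
    (∀ n, 1 ≤ n → (Nat.card ↥(⋃ i ∈ Finset.Ico 1 n, ((V i)⁻¹ * V n)) : ℝ)
      ≤ ((d : ℝ) - 1) / ((d : ℝ) - 2) * (Nat.card ↥(V n) : ℝ)) := by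
  have hle : ∀ {m n : ℕ}, m ≤ n → G m ≤ G n := by
    intro m n h
    exact monotone_nat_of_le_succ hmono h
  have hGfin : ∀ n, (G n : Set Γ).Finite := by
    intro n
    haveI := hfin n
    exact Set.toFinite _
  have hVfin : ∀ n, 1 ≤ n → (V n).Finite := by
    intro n h
    rw [hV n h]; exact (hGfin n).diff
  refine ⟨?_, ?_, ?_⟩
  · intro n hn
    obtain ⟨m, rfl⟩ : ∃ m, n = m + 1 := ⟨n - 1, by omega⟩
    have hsub : (G m : Set Γ) ⊆ (G (m + 1) : Set Γ) := hle (Nat.le_succ m)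
    simp only [Nat.add_sub_cancel]
    rw [hV (m + 1) hn, Nat.card_coe_set_eq]
    simp only [Nat.add_sub_cancel]
    rw [Set.ncard_diff hsub (hGfin _)]
    have h1 : (G (m+1) : Set Γ).ncard = (d - 1) ^ (m + 1) := by
      rw [← Nat.card_coe_set_eq, SetLike.coe_sort_coe, hcard]
    have h2 : (G m : Set Γ).ncard = (d - 1) ^ m := by
      rw [← Nat.card_coe_set_eq, SetLike.coe_sort_coe, hcard]
    rw [h1, h2]
    have hdd : d - 2 = d - 1 - 1 := by omega
    rw [hdd, Nat.sub_mul, one_mul, ← pow_succ']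
  · intro g
    obtain ⟨m, hm⟩ := hunion g
    refine ⟨m + 1, fun n hn => ?_⟩
    have hn1 : 1 ≤ n := le_trans (Nat.le_add_left 1 m) hn
    have hg1 : g ∈ G (n - 1) := hle (by omega) hm
    have hgn : g ∈ G n := hle (by omega) hm
    ext x
    simp only [Set.mem_image, hV n hn1, Set.mem_diff, SetLike.mem_coe]
    constructor
    · rintro ⟨y, ⟨hy1, hy2⟩, rfl⟩
      exact ⟨mul_mem hgn hy1, fun h => hy2 (((G (n-1)).mul_mem_cancel_left hg1).mp h)⟩
    · rintro ⟨h1, h2⟩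
      refine ⟨g⁻¹ * x, ⟨mul_mem (inv_mem hgn) h1, fun h => h2 ?_⟩, by group⟩
      have := mul_mem hg1 h
      rwa [mul_inv_cancel_left] at this
  · intro n hn
    have key : (⋃ i ∈ Finset.Ico 1 n, ((V i)⁻¹ * V n)) ⊆ V n := by
      intro x hx
      simp only [Set.mem_iUnion, Finset.mem_Ico] at hx
      obtain ⟨i, ⟨hi1, hi2⟩, hx⟩ := hx
      rw [Set.mem_mul] at hx
      obtain ⟨a, ha, b, hb, rfl⟩ := hx
      rw [Set.mem_inv, hV i hi1] at ha
      rw [hV n hn] at hb ⊢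
      have haG : a ∈ G (n - 1) := by
        have h1 : a⁻¹ ∈ G (n - 1) := hle (show i ≤ n - 1 by omega) ha.1
        simpa using inv_mem h1
      have hb1 : b ∈ G n := hb.1
      have hb2 : b ∉ G (n - 1) := hb.2
      refine ⟨?_, ?_⟩
      · exact mul_mem (hle (show n - 1 ≤ n by omega) haG) hb1
      · intro h
        apply hb2
        have h' : a * b ∈ G (n - 1) := h
        have := mul_mem (inv_mem haG) h'
        simpa using this
    have hcardle : Nat.card ↥(⋃ i ∈ Finset.Ico 1 n, ((V i)⁻¹ * V n)) ≤ Nat.card ↥(V n) := by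
      rw [Nat.card_coe_set_eq, Nat.card_coe_set_eq]
      exact Set.ncard_le_ncard key (hVfin n hn)
    have hd2 : (0 : ℝ) < (d : ℝ) - 2 := by
      have : (3 : ℝ) ≤ d := by exact_mod_cast hd
      linarith
    have h1 : (1 : ℝ) ≤ ((d : ℝ) - 1) / ((d : ℝ) - 2) := by
      rw [le_div_iff₀ hd2]; linarith
    calc (Nat.card ↥(⋃ i ∈ Finset.Ico 1 n, ((V i)⁻¹ * V n)) : ℝ)
        ≤ (Nat.card ↥(V n) : ℝ) := by exact_mod_cast hcardle
      _ ≤ ((d : ℝ) - 1) / ((d : ℝ) - 2) * (Nat.card ↥(V n) : ℝ) := by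
          nlinarith [Nat.cast_nonneg (α := ℝ) (Nat.card ↥(V n))]
end

section
/- Let (Ω, μ) be a probability space, E a finite set, S a countable index set, and (α_s)_{s∈S} measurable functions α_s : Ω → E. Let (F_n)_{n≥1} be a sequence of nonempty finite subsets of S with |F_{n+1}| > |F_n| for all n. Define I_n(ω) := -log μ({ω' : α_s(ω') = α_s(ω) for all s ∈ F_n}). Then there is a constant C depending only on |E| such that ∫_Ω sup_n (I_n(ω)/|F_n|) dμ(ω) < C. -/
open MeasureTheory
open scoped ENNReal NNReal

lemma aux_entropy (p c : ℝ) (hp : 0 < p) :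
    p * (-Real.log p - c) ≤ Real.exp (-c - 1) := by
  have h := Real.log_le_sub_one_of_pos (x := Real.exp (-c - 1) / p) (by positivity)
  rw [Real.log_div (Real.exp_ne_zero _) (ne_of_gt hp), Real.log_exp] at h
  have h2 : -Real.log p - c ≤ Real.exp (-c - 1) / p := by linarith
  calc p * (-Real.log p - c) ≤ p * (Real.exp (-c - 1) / p) :=
        mul_le_mul_of_nonneg_left h2 hp.le
    _ = Real.exp (-c - 1) := by field_simp

set_option maxHeartbeats 1000000 in
/-- Maximal inequality for the normalized information function: there is a constant
`C` depending only on the cardinality of the finite state space `E` such that for any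
probability space `(Ω, μ)`, any `E`-valued process `(α s)` over a countable index set
`S`, and any sequence `(F n)` of nonempty finite subsets of `S` with strictly
increasing cardinalities, writing
`I n ω = - log μ {ω' | α s ω' = α s ω for all s ∈ F n}`, one has
`∫ sup_n (I n / |F n|) dμ < C`. -/
theorem stmt_6 (E : Type*) [Fintype E] :
    ∃ C : ℝ, ∀ (Ω : Type) (_ : MeasurableSpace Ω) (μ : Measure Ω)
      (_ : IsProbabilityMeasure μ)
      (S : Type) (_ : Countable S) (α : S → Ω → E)
      (_ : ∀ s : S, ∀ e : E, MeasurableSet {ω | α s ω = e})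
      (F : ℕ → Finset S) (_ : ∀ n, (F n).Nonempty)
      (_ : ∀ n, (F n).card < (F (n + 1)).card),
      ∫⁻ ω, ⨆ n : ℕ,
          ENNReal.ofReal
            (-Real.log ((μ {ω' | ∀ s ∈ F n, α s ω' = α s ω}).toReal) / (F n).card) ∂μ
        < ENNReal.ofReal C := by
  classical
  letI : MeasurableSpace E := ⊤
  haveI : MeasurableSingletonClass E := ⟨fun _ => trivial⟩
  refine ⟨Real.log (Fintype.card E) + 3, ?_⟩
  intro Ω mΩ μ hμ S hS α hα F hF hFc
  set L : ℝ := Real.log (Fintype.card E) with hLdef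
  -- rule out empty E
  rcases Nat.eq_zero_or_pos (Fintype.card E) with hE | hE
  · haveI hEe : IsEmpty E := Fintype.card_eq_zero_iff.mp hE
    obtain ⟨s, _⟩ := hF 0
    haveI : IsEmpty Ω := ⟨fun ω => hEe.false (α s ω)⟩
    have h1 : μ Set.univ = 1 := measure_univ
    rw [Set.univ_eq_empty_iff.mpr ‹IsEmpty Ω›, measure_empty] at h1
    exact absurd h1 (by norm_num)
  have hL0 : 0 ≤ L := Real.log_nonneg (by exact_mod_cast hE)
  have hEpos : (0:ℝ) < Fintype.card E := by exact_mod_cast hE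
  -- measurability of coordinates
  have hαm : ∀ s, Measurable (α s) := by
    intro s
    refine measurable_to_countable' fun e => ?_
    have := hα s e
    exact this
  -- cardinality growth
  have hk1 : ∀ n, n + 1 ≤ (F n).card := by
    intro n
    induction n with
    | zero => simpa using (hF 0).card_pos
    | succ m ih => exact Nat.succ_le_of_lt (lt_of_le_of_lt ih (hFc m))
  -- the normalized information function
  set g : ℕ → Ω → ℝ := fun n ω =>
    -Real.log ((μ {ω' | ∀ s ∈ F n, α s ω' = α s ω}).toReal) / (F n).card with hgdef
  -- per-n analysis
  have main : ∀ n, Measurable (fun ω => ENNReal.ofReal (g n ω - (L + 1))) ∧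
      ∫⁻ ω, ENNReal.ofReal (g n ω - (L + 1)) ∂μ ≤ ENNReal.ofReal ((1/2 : ℝ) ^ (n + 1)) := by
    intro n
    set k : ℕ := (F n).card with hkdef
    have hkpos : 0 < k := (hF n).card_pos
    have hkn : (n : ℝ) + 1 ≤ k := by exact_mod_cast hk1 n
    set Lm : Ω → (↥(F n) → E) := fun ω s => α s ω with hLm
    have hLmm : Measurable Lm := measurable_pi_lambda _ fun s => hαm s
    set ν : Measure (↥(F n) → E) := μ.map Lm with hν
    haveI : IsProbabilityMeasure ν := Measure.isProbabilityMeasure_map hLmm.aemeasurable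
    have hset : ∀ ω, {ω' | ∀ s ∈ F n, α s ω' = α s ω} = Lm ⁻¹' {Lm ω} := by
      intro ω
      ext ω'
      simp [hLm, Set.mem_preimage, funext_iff, Subtype.forall]
    have hmν : ∀ ω, μ {ω' | ∀ s ∈ F n, α s ω' = α s ω} = ν {Lm ω} := by
      intro ω
      rw [hset ω, hν, Measure.map_apply hLmm (measurableSet_singleton _)]
    set f : (↥(F n) → E) → ℝ≥0∞ :=
      fun v => ENNReal.ofReal (-Real.log ((ν {v}).toReal) / k - (L + 1)) with hf
    have hfm : Measurable f := fun s _ => (Set.to_countable _).measurableSet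
    have hcomp : (fun ω => ENNReal.ofReal (g n ω - (L + 1))) = fun ω => f (Lm ω) := by
      funext ω
      rw [hgdef]
      simp only [hf, hmν ω, ← hkdef]
    constructor
    · rw [hcomp]; exact hfm.comp hLmm
    -- the integral estimate
    have hbound : ∀ v : (↥(F n) → E),
        f v * ν {v} ≤ ENNReal.ofReal (Real.exp (-(k * (L + 1)) - 1) / k) := by
      intro v
      set p : ℝ := (ν {v}).toReal with hp
      have hνv : ν {v} = ENNReal.ofReal p :=
        (ENNReal.ofReal_toReal (measure_ne_top ν _)).symm
      rcases le_or_gt (-Real.log p / k - (L + 1)) 0 with hc | hc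
      · have : f v = 0 := ENNReal.ofReal_eq_zero.mpr hc
        rw [this, zero_mul]
        exact zero_le
      · have hppos : 0 < p := by
          have hple : 0 ≤ p := ENNReal.toReal_nonneg
          rcases lt_or_eq_of_le hple with h | h
          · exact h
          · exfalso
            have hlog : Real.log p = 0 := by rw [← h]; exact Real.log_zero
            rw [hlog] at hc
            have hk0 : (0:ℝ) ≤ (k:ℝ) := Nat.cast_nonneg k
            simp only [neg_zero, zero_div] at hc
            linarith
        have heq : f v * ν {v} = ENNReal.ofReal ((-Real.log p / k - (L + 1)) * p) := by
          rw [hf, hνv, ← ENNReal.ofReal_mul hc.le]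
        rw [heq]
        apply ENNReal.ofReal_le_ofReal
        have hk0 : (k:ℝ) ≠ 0 := Nat.cast_ne_zero.mpr hkpos.ne' 
        have hring : (-Real.log p / k - (L + 1)) * p
            = (p * (-Real.log p - k * (L + 1))) / k := by
          field_simp
        rw [hring]
        have hkpos' : (0:ℝ) < (k:ℝ) := Nat.cast_pos.mpr hkpos
        exact (div_le_div_iff_of_pos_right hkpos').mpr (aux_entropy p (k * (L + 1)) hppos)
    calc ∫⁻ ω, ENNReal.ofReal (g n ω - (L + 1)) ∂μ
        = ∫⁻ v, f v ∂ν := by rw [hcomp, hν, lintegral_map hfm hLmm]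
      _ = ∑ v, f v * ν {v} := lintegral_fintype (μ := ν) f
      _ ≤ ∑ _v : (↥(F n) → E), ENNReal.ofReal (Real.exp (-(k * (L + 1)) - 1) / k) :=
          Finset.sum_le_sum fun v _ => hbound v
      _ = (Fintype.card (↥(F n) → E) : ℝ≥0∞)
            * ENNReal.ofReal (Real.exp (-(k * (L + 1)) - 1) / k) := by
          rw [Finset.sum_const, Finset.card_univ, nsmul_eq_mul]
      _ ≤ ENNReal.ofReal ((1/2 : ℝ) ^ (n + 1)) := by
          rw [← ENNReal.ofReal_natCast, ← ENNReal.ofReal_mul (by positivity)]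
          apply ENNReal.ofReal_le_ofReal
          have hcard : (Fintype.card (↥(F n) → E) : ℝ) = (Fintype.card E : ℝ) ^ k := by
            rw [Fintype.card_fun, Fintype.card_coe]
            push_cast
            rfl
          have hEL : (Fintype.card E : ℝ) = Real.exp L := (Real.exp_log hEpos).symm
          rw [hcard, hEL, ← Real.exp_nat_mul]
          have e1 : Real.exp (k * L) * (Real.exp (-(k * (L + 1)) - 1) / k)
              = Real.exp (-(k:ℝ) - 1) / k := by
            rw [mul_div_assoc', ← Real.exp_add]
            ring_nf
          rw [e1]
          have e2 : Real.exp (-(k:ℝ) - 1) / k ≤ Real.exp (-(k:ℝ) - 1) :=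
            div_le_self (Real.exp_pos _).le (Nat.one_le_cast.mpr hkpos)
          have e3 : Real.exp (-(k:ℝ) - 1) ≤ Real.exp (-((n:ℝ) + 1)) :=
            Real.exp_le_exp.mpr (by linarith)
          have e4 : Real.exp (-((n:ℝ) + 1)) ≤ (1/2 : ℝ) ^ (n + 1) := by
            have h2e : (2:ℝ) ≤ Real.exp 1 := by nlinarith [Real.add_one_le_exp (1:ℝ)]
            have : Real.exp (-((n:ℝ) + 1)) = (Real.exp (-1)) ^ (n + 1) := by
              rw [← Real.exp_nat_mul]
              congr 1
              push_cast
              ring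
            rw [this]
            apply pow_le_pow_left₀ (Real.exp_pos _).le
            rw [Real.exp_neg]
            rw [inv_le_comm₀ (Real.exp_pos 1) (by norm_num)] at *
            · nlinarith
          linarith
  -- assemble
  have hmeas : ∀ n, Measurable (fun ω => ENNReal.ofReal (g n ω - (L + 1))) :=
    fun n => (main n).1
  have hpt : ∀ ω, (⨆ n, ENNReal.ofReal (g n ω))
      ≤ ENNReal.ofReal (L + 1) + ∑' n, ENNReal.ofReal (g n ω - (L + 1)) := by
    intro ω
    refine iSup_le fun n => ?_
    have h1 : ENNReal.ofReal (g n ω)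
        ≤ ENNReal.ofReal (L + 1) + ENNReal.ofReal (g n ω - (L + 1)) := by
      rcases le_total (g n ω) (L + 1) with h | h
      · exact le_add_right (ENNReal.ofReal_le_ofReal h)
      · rw [← ENNReal.ofReal_add (by linarith) (by linarith)]
        apply ENNReal.ofReal_le_ofReal
        linarith
    exact h1.trans (add_le_add_right (ENNReal.le_tsum n) _)
  have hsum : (∑' n, ∫⁻ ω, ENNReal.ofReal (g n ω - (L + 1)) ∂μ) ≤ 1 := by
    calc (∑' n, ∫⁻ ω, ENNReal.ofReal (g n ω - (L + 1)) ∂μ)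
        ≤ ∑' n : ℕ, ENNReal.ofReal ((1/2 : ℝ) ^ (n + 1)) :=
          ENNReal.tsum_le_tsum fun n => (main n).2
      _ = ENNReal.ofReal (∑' n : ℕ, (1/2 : ℝ) ^ (n + 1)) := by
          rw [ENNReal.ofReal_tsum_of_nonneg (fun n => by positivity)]
          · exact (summable_geometric_of_lt_one (by norm_num) (by norm_num)).comp_injective
              (add_left_injective 1)
      _ = 1 := by
          have : ∑' n : ℕ, (1/2 : ℝ) ^ (n + 1) = 1 := by
            have h := tsum_geometric_of_lt_one (by norm_num : (0:ℝ) ≤ 1/2) (by norm_num)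
            calc ∑' n : ℕ, (1/2 : ℝ) ^ (n + 1)
                = ∑' n : ℕ, (1/2 : ℝ) * (1/2) ^ n := by
                  congr 1; funext n; rw [pow_succ]; ring
              _ = (1/2 : ℝ) * ∑' n : ℕ, (1/2 : ℝ) ^ n := tsum_mul_left
              _ = 1 := by rw [h]; norm_num
          rw [this, ENNReal.ofReal_one]
  calc ∫⁻ ω, ⨆ n, ENNReal.ofReal (g n ω) ∂μ
      ≤ ∫⁻ ω, (ENNReal.ofReal (L + 1) + ∑' n, ENNReal.ofReal (g n ω - (L + 1))) ∂μ :=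
        lintegral_mono hpt
    _ = ENNReal.ofReal (L + 1) + ∑' n, ∫⁻ ω, ENNReal.ofReal (g n ω - (L + 1)) ∂μ := by
        rw [lintegral_add_left measurable_const, lintegral_const, measure_univ, mul_one,
          lintegral_tsum fun n => (hmeas n).aemeasurable]
    _ ≤ ENNReal.ofReal (L + 1) + 1 := add_le_add_right hsum _
    _ < ENNReal.ofReal (L + 3) := by
        rw [← ENNReal.ofReal_one, ← ENNReal.ofReal_add (by linarith) (by norm_num)]
        exact ENNReal.ofReal_lt_ofReal_iff_of_nonneg (by linarith) |>.mpr (by linarith)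
end
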